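/- arXiv:2402.07015 — 2 statements merged into one kernel-verified Lean document; each statement's English description precedes it below -/
import Mathlib

section
/- The sequence ϑ is square-free: there do not exist i, n : ℕ with n ≥ 1 such that ϑ (i + j) = ϑ (i + n + j) for all j < n, where ϑ : ℕ → ℕ is defined by ϑ n = 2 if t n = t (n+1), ϑ n = 1 if t n = true ≠ t (n+1), and ϑ n = 0 if t n = false ≠ t (n+1). -/
/-- The Thue–Morse sequence: `t n = true` iff the number of 1s in the
binary expansion of `n` is odd. -/
def thueMorse (n : ℕ) : Bool := (Nat.digits 2 n).count 1 % 2 == 1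

/-- The sequence `ϑ` obtained from the Thue–Morse sequence by replacing
the first digit of each factor 00 or 11 by 2. -/
def vartheta (n : ℕ) : ℕ :=
  if thueMorse n = thueMorse (n + 1) then 2 else (if thueMorse n then 1 else 0)

lemma tm_two_mul (k : ℕ) : thueMorse (2 * k) = thueMorse k := by
  rcases Nat.eq_zero_or_pos k with h | h
  · simp [h]
  · unfold thueMorse
    rw [Nat.digits_def' (by norm_num : 1 < 2) (by omega)]
    have h1 : 2 * k % 2 = 0 := by omega
    have h2 : 2 * k / 2 = k := by omega
    rw [h1, h2]
    simp [List.count_cons]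

lemma tm_two_mul_add_one (k : ℕ) : thueMorse (2 * k + 1) = !thueMorse k := by
  unfold thueMorse
  rw [Nat.digits_def' (by norm_num : 1 < 2) (by omega)]
  have h1 : (2 * k + 1) % 2 = 1 := by omega
  have h2 : (2 * k + 1) / 2 = k := by omega
  rw [h1, h2]
  rcases Nat.mod_two_eq_zero_or_one ((Nat.digits 2 k).count 1) with h | h <;>
    simp [List.count_cons, Nat.add_mod, h]

lemma tm_no_overlap : ∀ n, 1 ≤ n → ∀ i,
    (∀ j ≤ n, thueMorse (i + j) = thueMorse (i + n + j)) → False := by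
  intro n
  induction n using Nat.strong_induction_on with
  | _ n IH =>
    intro hn i H
    rcases Nat.lt_or_ge n 2 with h2 | h2
    · -- n = 1
      have hn1 : n = 1 := by omega
      subst hn1
      have e1 : thueMorse i = thueMorse (i + 1) := by
        have h := H 0 (by omega); simpa using h
      have e2 : thueMorse (i + 1) = thueMorse (i + 2) := by
        have h := H 1 le_rfl
        have : i + 1 + 1 = i + 2 := by omega
        rwa [this] at h
      rcases Nat.even_or_odd i with ⟨q, hq⟩ | ⟨q, hq⟩
      · have hq' : i = 2 * q := by omega
        rw [hq', show 2 * q + 1 = 2 * q + 1 from rfl] at e1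
        rw [tm_two_mul, tm_two_mul_add_one] at e1
        cases thueMorse q <;> simp_all
      · have h1 : i + 1 = 2 * (q + 1) := by omega
        have h2' : i + 2 = 2 * (q + 1) + 1 := by omega
        rw [h1, h2'] at e2
        rw [tm_two_mul, tm_two_mul_add_one] at e2
        cases thueMorse (q + 1) <;> simp_all
    · rcases Nat.even_or_odd n with ⟨m, hm⟩ | ⟨m, hm⟩
      · -- n = 2m even
        have hm' : n = 2 * m := by omega
        have hm1 : 1 ≤ m := by omega
        rcases Nat.even_or_odd i with ⟨q, hq⟩ | ⟨q, hq⟩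
        · refine IH m (by omega) hm1 q ?_
          intro j hj
          have h := H (2 * j) (by omega)
          have e1 : i + 2 * j = 2 * (q + j) := by omega
          have e2 : i + n + 2 * j = 2 * (q + m + j) := by omega
          rw [e1, e2, tm_two_mul, tm_two_mul] at h
          exact h
        · refine IH m (by omega) hm1 q ?_
          intro j hj
          have h := H (2 * j) (by omega)
          have e1 : i + 2 * j = 2 * (q + j) + 1 := by omega
          have e2 : i + n + 2 * j = 2 * (q + m + j) + 1 := by omega
          rw [e1, e2, tm_two_mul_add_one, tm_two_mul_add_one] at h
          simpa using h
      · -- n = 2m+1 odd, n ≥ 3, so m ≥ 1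
        have hm' : n = 2 * m + 1 := by omega
        have hm1 : 1 ≤ m := by omega
        have h0 := H 0 (by omega)
        have h1 := H 1 (by omega)
        have h2' := H 2 (by omega)
        have h3 := H 3 (by omega)
        rcases Nat.even_or_odd i with ⟨q, hq⟩ | ⟨q, hq⟩
        · -- i = 2q : get t(q+m) = t(q+m+1) = t(q+m+2)
          have e0a : i + 0 = 2 * q := by omega
          have e0b : i + n + 0 = 2 * (q + m) + 1 := by omega
          have e1a : i + 1 = 2 * q + 1 := by omega
          have e1b : i + n + 1 = 2 * (q + m + 1) := by omega
          have e2a : i + 2 = 2 * (q + 1) := by omega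
          have e2b : i + n + 2 = 2 * (q + m + 1) + 1 := by omega
          have e3a : i + 3 = 2 * (q + 1) + 1 := by omega
          have e3b : i + n + 3 = 2 * (q + m + 2) := by omega
          rw [e0a, e0b, tm_two_mul, tm_two_mul_add_one] at h0
          rw [e1a, e1b, tm_two_mul_add_one, tm_two_mul] at h1
          rw [e2a, e2b, tm_two_mul, tm_two_mul_add_one] at h2'
          rw [e3a, e3b, tm_two_mul_add_one, tm_two_mul] at h3
          refine IH 1 (by omega) le_rfl (q + m) ?_
          clear IH H e0a e0b e1a e1b e2a e2b e3a e3b hq hm hm' h2 hn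
          intro j hj
          interval_cases j
          · -- t(q+m) = t(q+m+1)
            have : q + m + 0 = q + m := by omega
            rw [this]
            have : q + m + 1 + 0 = q + m + 1 := by omega
            rw [this]
            cases hb : thueMorse q <;> cases hc : thueMorse (q + m) <;>
              cases hd : thueMorse (q + m + 1) <;> simp_all
          · have : q + m + 1 + 1 = q + m + 2 := by omega
            rw [this]
            cases hb : thueMorse (q + 1) <;> cases hc : thueMorse (q + m + 1) <;>
              cases hd : thueMorse (q + m + 2) <;> simp_all
        · -- i = 2q+1 : get t(q) = t(q+1) = t(q+2)
          have e0a : i + 0 = 2 * q + 1 := by omega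
          have e0b : i + n + 0 = 2 * (q + m + 1) := by omega
          have e1a : i + 1 = 2 * (q + 1) := by omega
          have e1b : i + n + 1 = 2 * (q + m + 1) + 1 := by omega
          have e2a : i + 2 = 2 * (q + 1) + 1 := by omega
          have e2b : i + n + 2 = 2 * (q + m + 2) := by omega
          have e3a : i + 3 = 2 * (q + 2) := by omega
          have e3b : i + n + 3 = 2 * (q + m + 2) + 1 := by omega
          rw [e0a, e0b, tm_two_mul_add_one, tm_two_mul] at h0
          rw [e1a, e1b, tm_two_mul, tm_two_mul_add_one] at h1
          rw [e2a, e2b, tm_two_mul_add_one, tm_two_mul] at h2'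
          rw [e3a, e3b, tm_two_mul, tm_two_mul_add_one] at h3
          refine IH 1 (by omega) le_rfl q ?_
          clear IH H e0a e0b e1a e1b e2a e2b e3a e3b hq hm hm' h2 hn
          intro j hj
          interval_cases j
          · have : q + 0 = q := by omega
            rw [this]
            have : q + 1 + 0 = q + 1 := by omega
            rw [this]
            cases hb : thueMorse q <;> cases hc : thueMorse (q + 1) <;>
              cases hd : thueMorse (q + m + 1) <;> simp_all
          · have : q + 1 + 1 = q + 2 := by omega
            rw [this]
            cases hb : thueMorse (q + 1) <;> cases hc : thueMorse (q + 2) <;>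
              cases hd : thueMorse (q + m + 2) <;> simp_all

lemma vt_two_iff (k : ℕ) : vartheta k = 2 ↔ thueMorse k = thueMorse (k + 1) := by
  unfold vartheta
  by_cases h : thueMorse k = thueMorse (k + 1) <;> simp [h] <;>
    cases thueMorse k <;> simp

lemma vt_step (k k' : ℕ) (hv : vartheta k = vartheta k')
    (ht : thueMorse k = thueMorse k') : thueMorse (k + 1) = thueMorse (k' + 1) := by
  unfold vartheta at hv
  cases hb : thueMorse k <;> cases hc : thueMorse (k + 1) <;>
    cases hd : thueMorse k' <;> cases he : thueMorse (k' + 1) <;> simp_all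

lemma vt_flip (k k' : ℕ) (hv : vartheta k = vartheta k')
    (ht : thueMorse k = !thueMorse k') : thueMorse (k + 1) = !thueMorse (k' + 1) := by
  unfold vartheta at hv
  cases hb : thueMorse k <;> cases hc : thueMorse (k + 1) <;>
    cases hd : thueMorse k' <;> cases he : thueMorse (k' + 1) <;> simp_all

lemma vt_eq_two_of_ne (k k' : ℕ) (hv : vartheta k = vartheta k')
    (ht : thueMorse k ≠ thueMorse k') : vartheta k = 2 := by
  unfold vartheta at hv ⊢
  cases hb : thueMorse k <;> cases hc : thueMorse (k + 1) <;>
    cases hd : thueMorse k' <;> cases he : thueMorse (k' + 1) <;> simp_all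

/-- The sequence `ϑ` is square-free. -/
theorem vartheta_squareFree :
    ¬ ∃ (i n : ℕ), 1 ≤ n ∧ ∀ j < n, vartheta (i + j) = vartheta (i + n + j) := by
  rintro ⟨i, n, hn, Hv⟩
  by_cases hb : thueMorse i = thueMorse (i + n)
  · -- equality propagates: overlap of period n in Thue–Morse
    have key : ∀ j ≤ n, thueMorse (i + j) = thueMorse (i + n + j) := by
      intro j hj
      induction j with
      | zero => simpa using hb
      | succ j ih =>
        have h1 := ih (by omega)
        have h2 := Hv j (by omega)
        have h3 := vt_step (i + j) (i + n + j) h2 h1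
        have e1 : i + j + 1 = i + (j + 1) := by omega
        have e2 : i + n + j + 1 = i + n + (j + 1) := by omega
        rwa [e1, e2] at h3
    exact tm_no_overlap n hn i key
  · -- flip propagates: all vartheta values in the square equal 2
    have key : ∀ j ≤ n, thueMorse (i + j) = !thueMorse (i + n + j) := by
      intro j hj
      induction j with
      | zero =>
        simp only [Nat.add_zero]
        cases hc : thueMorse i <;> cases hd : thueMorse (i + n) <;> simp_all
      | succ j ih =>
        have h1 := ih (by omega)
        have h2 := Hv j (by omega)
        have h3 := vt_flip (i + j) (i + n + j) h2 h1
        have e1 : i + j + 1 = i + (j + 1) := by omega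
        have e2 : i + n + j + 1 = i + n + (j + 1) := by omega
        rwa [e1, e2] at h3
    have vt2 : ∀ j < n, vartheta (i + j) = 2 ∧ vartheta (i + n + j) = 2 := by
      intro j hj
      have h1 := key j (by omega)
      have h2 := Hv j hj
      have hne : thueMorse (i + j) ≠ thueMorse (i + n + j) := by
        cases hc : thueMorse (i + j) <;> cases hd : thueMorse (i + n + j) <;> simp_all
      constructor
      · exact vt_eq_two_of_ne _ _ h2 hne
      · exact vt_eq_two_of_ne _ _ h2.symm (Ne.symm hne)
    -- t(i) = t(i+1) and t(i+1) = t(i+2): period-1 overlap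
    have c1 : thueMorse i = thueMorse (i + 1) := by
      have := (vt2 0 (by omega)).1
      rw [Nat.add_zero] at this
      exact (vt_two_iff i).mp this
    have c2 : thueMorse (i + 1) = thueMorse (i + 2) := by
      rcases Nat.lt_or_ge 1 n with h | h
      · have := (vt2 1 h).1
        have h2 := (vt_two_iff (i + 1)).mp this
        rwa [show i + 1 + 1 = i + 2 from by omega] at h2
      · have hn1 : n = 1 := by omega
        have := (vt2 0 (by omega)).2
        rw [hn1, Nat.add_zero] at this
        have h2 := (vt_two_iff (i + 1)).mp this
        rwa [show i + 1 + 1 = i + 2 from by omega] at h2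
    refine tm_no_overlap 1 le_rfl i ?_
    intro j hj
    interval_cases j
    · simpa using c1
    · rw [show i + 1 + 1 = i + 2 from by omega]
      simpa using c2
end

section
/- The run-length-coded sequence α built from θ is a Morse-type minimal point: the orbit closure closure {σ^[k] α | k : ℕ} ⊆ (ℕ → Bool) is minimal (every nonempty closed shift-invariant subset of it equals it) and uncountable. Here α : ℕ → Bool is defined as follows: let s : ℕ → ℕ satisfy s 0 = 0 and s (n+1) = s n + θ n + 2, and set α m = false if there exists n with m + 1 = s (n+1), and α m = true otherwise (so α is the concatenation, over n, of a run of (θ n + 1) ones followed by a single zero; α = 101101110101101011101101110101110 11⋯). -/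
/-- The sequence `θ` obtained from the Thue–Morse sequence by replacing
the second digit of each factor 00 or 11 by 2. -/
def theta : ℕ → ℕ
  | 0 => if thueMorse 0 then 1 else 0
  | (n + 1) =>
      if thueMorse n = thueMorse (n + 1) then 2
      else (if thueMorse (n + 1) then 1 else 0)

/-- Partial sums marking the positions of the 0s in the run-length coding:
`s (n+1) = s n + θ n + 2`. -/
def runPos : ℕ → ℕ
  | 0 => 0
  | (n + 1) => runPos n + theta n + 2

open Classical in
/-- The run-length-coded sequence `α` built from `θ`: the concatenation, over
`n`, of a run of `θ n + 1` ones followed by a single zero. -/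
noncomputable def alpha (m : ℕ) : Bool :=
  if ∃ n : ℕ, m + 1 = runPos (n + 1) then false else true

/-- The shift map on the one-sided binary full shift. -/
def shift (x : ℕ → Bool) : ℕ → Bool := fun n => x (n + 1)

/-!
Write `t` for the Thue–Morse sequence. Since `t (2 ^ k m + i) = t m ⊕ t i` for `i < 2 ^ k`, a
descent `t m = 1`, `t (m + 1) = 0` reproduces, for `k` even, the prefix of `θ` of length `2 ^ k` at
`2 ^ k (m + 1)`. Descents occur in every window of length 7, so `θ` is uniformly recurrent, and so
is its run-length coding `α`, whose runs have bounded length; hence the orbit closure of `α` is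
minimal. An isolated point of a minimal orbit closure is a periodic point on the orbit, which would
make `α`, hence `θ` and `t`, eventually periodic; `t (2n) = t n` and `t (2n + 1) = ¬ t n` rule this
out. So the orbit closure is a nonempty perfect compact set, uncountable by Baire's theorem.
-/

open Set Function

def EventuallyPeriodic {A : Type*} (x : ℕ → A) : Prop :=
  ∃ p, 0 < p ∧ ∃ K, ∀ n, K ≤ n → x (n + p) = x n

def UniformlyRecurrent {A : Type*} (x : ℕ → A) : Prop :=
  ∀ N, ∃ B, ∀ p, ∃ j ≤ B, ∀ i < N, x (p + j + i) = x i

theorem StrictMono.exists_le_lt_succ {r : ℕ → ℕ} (hr : StrictMono r) {p : ℕ} (hp : r 0 ≤ p) :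
    ∃ n, r n ≤ p ∧ p < r (n + 1) := by
  have hex : ∃ n, p < r n := ⟨p + 1, (lt_add_one p).trans_le hr.le_apply⟩
  have hpos : Nat.find hex ≠ 0 := fun h => (Nat.find_spec hex).not_ge (h ▸ hp)
  refine ⟨Nat.find hex - 1, not_lt.mp (Nat.find_min hex (by omega)), ?_⟩
  rw [Nat.sub_add_cancel (by omega)]
  exact Nat.find_spec hex

theorem StrictMono.add_mem_range_iff {r : ℕ → ℕ} (hr : StrictMono r) {q N m : ℕ}
    (hadd : ∀ i ≤ N, r (q + i) = r q + r i) (hm : m ≤ r N) :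
    r q + m ∈ range r ↔ m ∈ range r := by
  constructor
  · rintro ⟨n, hn⟩
    have hqn : q ≤ n := hr.le_iff_le.mp (by omega)
    have hnN : n ≤ q + N := hr.le_iff_le.mp (by rw [hadd N le_rfl]; omega)
    have := hadd (n - q) (by omega)
    rw [Nat.add_sub_cancel' hqn] at this
    exact ⟨n - q, by omega⟩
  · rintro ⟨i, rfl⟩
    exact ⟨q + i, hadd i (hr.le_iff_le.mp hm)⟩

theorem StrictMono.exists_add_eq_add {r : ℕ → ℕ} (hr : StrictMono r) {p K : ℕ}
    (h : ∀ m, K ≤ m → (m + p ∈ range r ↔ m ∈ range r)) :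
    ∃ d, ∀ n, K ≤ n → r (n + d) = r n + p := by
  have hmem : ∀ n, K ≤ n → r n + p ∈ range r :=
    fun n hn => (h _ (hn.trans hr.le_apply)).mpr ⟨n, rfl⟩
  choose! f hf using hmem
  have hsucc : ∀ n, K ≤ n → f (n + 1) = f n + 1 := by
    intro n hn
    have hrn := hr (lt_add_one n)
    have hlt : f n < f (n + 1) := hr.lt_iff_lt.mp (by rw [hf n hn, hf _ (by omega)]; omega)
    by_contra hne
    -- otherwise `r (f n + 1) - p` is in the range of `r`, strictly between `r n` and `r (n + 1)`
    have hmid₁ := hr (lt_add_one (f n))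
    have hmid₂ : r (f n + 1) < r (f (n + 1)) := hr (by omega)
    rw [hf n hn] at hmid₁
    rw [hf _ (by omega)] at hmid₂
    have hKle : K ≤ r (f n + 1) - p := by have := hr.le_apply (x := n); omega
    obtain ⟨i, hi⟩ := (h _ hKle).mp ⟨f n + 1, by omega⟩
    have h₁ : n < i := hr.lt_iff_lt.mp (by omega)
    have h₂ : i < n + 1 := hr.lt_iff_lt.mp (by omega)
    omega
  have hK : K ≤ f K := hr.le_iff_le.mp (by rw [hf K le_rfl]; omega)
  refine ⟨f K - K, fun n hn => ?_⟩
  suffices f n = n + (f K - K) by rw [← this, hf n hn]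
  induction n, hn using Nat.le_induction with
  | base => omega
  | succ n hn ih => rw [hsucc n hn, ih]; omega

section Dynamics

variable {X : Type*} [TopologicalSpace X]

def IsMinimalSet (f : X → X) (Y : Set X) : Prop :=
  ∀ K ⊆ Y, K.Nonempty → IsClosed K → f '' K ⊆ K → K = Y

theorem image_closure_range_iterate_subset {f : X → X} (hf : Continuous f) (x : X) :
    f '' closure (range fun k => f^[k] x) ⊆ closure (range fun k => f^[k] x) := by
  refine (image_closure_subset_closure_image hf).trans (closure_mono ?_)
  rintro _ ⟨_, ⟨k, rfl⟩, rfl⟩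
  exact ⟨k + 1, iterate_succ_apply' f k x⟩

theorem preperfect_closure_range_iterate {f : X → X} (hf : Continuous f) {x : X}
    (hmin : IsMinimalSet f (closure (range fun k => f^[k] x)))
    (hx : ∀ k p, 0 < p → ¬ IsPeriodicPt f p (f^[k] x)) :
    Preperfect (closure (range fun k => f^[k] x)) := by
  rw [preperfect_iff_nhds]
  intro a ha U hU
  by_contra! hiso
  -- the isolated point `a` lies on the orbit, at `f^[k] x`, and by minimality also on the orbit of
  -- `f^[k + 1] x`
  obtain ⟨_, hkU, k, rfl⟩ := mem_closure_iff_nhds.mp ha U hU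
  have hk : f^[k] x = a := hiso _ ⟨hkU, subset_closure ⟨k, rfl⟩⟩
  have hlater : closure (range fun m => f^[m] (f^[k + 1] x)) = closure (range fun k => f^[k] x) :=
    hmin _ (closure_mono (range_subset_iff.mpr fun m => ⟨m + (k + 1), iterate_add_apply f m _ x⟩))
      ⟨_, subset_closure ⟨0, rfl⟩⟩ isClosed_closure (image_closure_range_iterate_subset hf _)
  obtain ⟨_, hmU, m, rfl⟩ := mem_closure_iff_nhds.mp (hlater ▸ ha) U hU
  have hm : f^[m] (f^[k + 1] x) = a := hiso _ ⟨hmU, hlater ▸ subset_closure ⟨m, rfl⟩⟩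
  refine hx k (m + 1) m.succ_pos ?_
  rw [IsPeriodicPt, IsFixedPt, iterate_succ_apply, ← iterate_succ_apply' f k x, hm, hk]

theorem Perfect.not_countable [CompactSpace X] [T2Space X] {C : Set X} (hC : Perfect C)
    (hne : C.Nonempty) : ¬ C.Countable := by
  intro hc
  have : CompactSpace C := isCompact_iff_compactSpace.mp hC.closed.isCompact
  have : Countable C := hc.to_subtype
  have : Nonempty C := hne.to_subtype
  -- by Baire, one of the countably many closed singletons of `C` has nonempty interior
  obtain ⟨a, ha⟩ := nonempty_interior_of_iUnion_of_closed (fun _ : C => isClosed_singleton)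
    (iUnion_of_singleton C)
  have hopen : IsOpen ({a} : Set C) := ha.subset_singleton_iff.mp interior_subset ▸ isOpen_interior
  obtain ⟨U, hU, hUa⟩ := mem_nhds_subtype C a _ |>.mp (hopen.mem_nhds rfl)
  obtain ⟨y, ⟨hyU, hyC⟩, hya⟩ := preperfect_iff_nhds.mp hC.acc a a.2 U hU
  exact hya (congrArg Subtype.val (hUa (show (⟨y, hyC⟩ : C) ∈ Subtype.val ⁻¹' U from hyU)))

end Dynamics

theorem shift_iterate_apply (k : ℕ) (x : ℕ → Bool) (n : ℕ) : shift^[k] x n = x (n + k) := by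
  induction k generalizing x with
  | zero => rfl
  | succ k ih => rw [iterate_succ_apply, ih]; rfl

theorem continuous_shift : Continuous shift := continuous_pi fun n => continuous_apply (n + 1)

theorem mem_closure_iff_forall_exists_agree {E : Type*} [TopologicalSpace E] [DiscreteTopology E]
    {S : Set (ℕ → E)} {x : ℕ → E} : x ∈ closure S ↔ ∀ N, ∃ s ∈ S, ∀ i < N, s i = x i := by
  rw [(PiNat.isTopologicalBasis_cylinders fun _ => E).mem_closure_iff]
  constructor
  · intro h N
    obtain ⟨s, hs, hsS⟩ := h _ ⟨x, N, rfl⟩ (PiNat.self_mem_cylinder x N)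
    exact ⟨s, hsS, PiNat.mem_cylinder_iff.mp hs⟩
  · rintro h _ ⟨y, N, rfl⟩ hx
    obtain ⟨s, hsS, hs⟩ := h N
    rw [PiNat.mem_cylinder_iff_eq] at hx
    exact ⟨s, hx ▸ PiNat.mem_cylinder_iff.mpr hs, hsS⟩

theorem isMinimalSet_of_uniformlyRecurrent {x : ℕ → Bool} (hx : UniformlyRecurrent x) :
    IsMinimalSet shift (closure (range fun k => shift^[k] x)) := by
  intro K hKY ⟨y, hy⟩ hK hinv
  have hmaps : MapsTo shift K K := mapsTo_iff_image_subset.mpr hinv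
  -- `x` is a limit of shifts of `y`: a window of `y` of length `B + N` copies a window of `x`,
  -- which contains the prefix of `x` of length `N`
  have hxK : x ∈ K := by
    refine hK.closure_subset_iff.mpr (range_subset_iff.mpr fun j => (hmaps.iterate j) hy)
      (mem_closure_iff_forall_exists_agree.mpr fun N => ?_)
    obtain ⟨B, hB⟩ := hx N
    obtain ⟨_, ⟨m, rfl⟩, hm⟩ := mem_closure_iff_forall_exists_agree.mp (hKY hy) (B + N)
    beta_reduce at hm
    obtain ⟨j, hj, hjN⟩ := hB m
    refine ⟨shift^[j] y, ⟨j, rfl⟩, fun i hi => ?_⟩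
    rw [shift_iterate_apply, ← hm _ (by omega), shift_iterate_apply, ← hjN i hi]
    congr 1
    omega
  exact hKY.antisymm <|
    hK.closure_subset_iff.mpr (range_subset_iff.mpr fun k => (hmaps.iterate k) hxK)

theorem eventuallyPeriodic_of_isPeriodicPt_shift {x : ℕ → Bool} {k p : ℕ} (hp : 0 < p)
    (h : IsPeriodicPt shift p (shift^[k] x)) : EventuallyPeriodic x := by
  refine ⟨p, hp, k, fun n hn => ?_⟩
  have := congrFun h (n - k)
  rwa [← iterate_add_apply, shift_iterate_apply, shift_iterate_apply,
    show n - k + (p + k) = n + p by omega, Nat.sub_add_cancel hn] at this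

theorem thueMorse_two_mul_add (n : ℕ) {b : ℕ} (hb : b < 2) :
    thueMorse (2 * n + b) = xor (thueMorse n) (b == 1) := by
  rcases Nat.eq_zero_or_pos (2 * n + b) with h | h
  · obtain ⟨rfl, rfl⟩ : n = 0 ∧ b = 0 := by omega
    rfl
  · have hdigits : Nat.digits 2 (2 * n + b) = b :: Nat.digits 2 n := by
      rw [Nat.digits_def' (by norm_num) h]
      congr 2 <;> omega
    rw [thueMorse, thueMorse, hdigits]
    interval_cases b
    · simp
    · rcases Nat.mod_two_eq_zero_or_one ((Nat.digits 2 n).count 1) with h2 | h2 <;>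
        simp [Nat.add_mod, h2]

theorem thueMorse_two_mul (n : ℕ) : thueMorse (2 * n) = thueMorse n := by
  simpa using thueMorse_two_mul_add n (b := 0) (by norm_num)

theorem thueMorse_two_mul_add_one (n : ℕ) : thueMorse (2 * n + 1) = !thueMorse n := by
  simpa using thueMorse_two_mul_add n (b := 1) (by norm_num)

theorem thueMorse_two_pow_mul_add (k m : ℕ) {i : ℕ} (hi : i < 2 ^ k) :
    thueMorse (2 ^ k * m + i) = xor (thueMorse m) (thueMorse i) := by
  induction k generalizing i with
  | zero =>
    obtain rfl : i = 0 := by omega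
    simp [thueMorse]
  | succ k ih =>
    have hsplit : 2 ^ (k + 1) * m + i = 2 * (2 ^ k * m + i / 2) + i % 2 := by
      rw [pow_succ, mul_comm _ 2, mul_assoc]
      omega
    have hmod : i % 2 < 2 := Nat.mod_lt _ two_pos
    rw [hsplit, thueMorse_two_mul_add _ hmod, ih (by rw [pow_succ] at hi; omega), Bool.xor_assoc,
      ← thueMorse_two_mul_add _ hmod, Nat.div_add_mod]

theorem thueMorse_two_pow_sub_one (k : ℕ) : thueMorse (2 ^ k - 1) = (k % 2 == 1) := by
  induction k with
  | zero => rfl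
  | succ k ih =>
    have h : 2 ^ (k + 1) - 1 = 2 * (2 ^ k - 1) + 1 := by
      have := Nat.one_le_two_pow (n := k)
      rw [pow_succ]
      omega
    rw [h, thueMorse_two_mul_add_one, ih]
    rcases Nat.mod_two_eq_zero_or_one k with hk | hk <;> simp [Nat.add_mod, hk]

theorem thueMorse_not_eventuallyPeriodic : ¬ EventuallyPeriodic thueMorse := by
  rintro ⟨p, hp, K, h⟩
  induction p using Nat.strong_induction_on generalizing K with
  | _ p ih =>
  obtain ⟨m, rfl | rfl⟩ := Nat.even_or_odd' p
  · refine ih m (by omega) (by omega) K fun n hn => ?_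
    simpa [← mul_add, thueMorse_two_mul] using h (2 * n) (by omega)
  · -- With `n + 1 = (K + 1) p`, periodicity gives `t (2n+1) = t (n + (K+1) p) = t n`, but
    -- `t (2n+1) = ¬ t n`.
    have hper : Periodic (fun n => thueMorse (n + K)) (2 * m + 1) := fun n => by
      simpa [add_right_comm] using h (n + K) (by omega)
    have hK : K + 1 ≤ (K + 1) * (2 * m + 1) := Nat.le_mul_of_pos_right _ (by omega)
    obtain ⟨n, hn⟩ : ∃ n, n + 1 = (K + 1) * (2 * m + 1) := ⟨_, Nat.sub_add_cancel (by omega)⟩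
    have := hper.nat_mul (K + 1) (n - K)
    rw [Nat.cast_id, show n - K + (K + 1) * (2 * m + 1) + K = 2 * n + 1 by omega,
      Nat.sub_add_cancel (by omega), thueMorse_two_mul_add_one] at this
    simp at this

theorem theta_le_two (n : ℕ) : theta n ≤ 2 := by
  cases n <;> simp only [theta] <;> split_ifs <;> omega

theorem thueMorse_succ_eq_ite (n : ℕ) :
    thueMorse (n + 1) =
      if theta (n + 1) = 2 then thueMorse n else decide (theta (n + 1) = 1) := by
  cases h : thueMorse n <;> cases h' : thueMorse (n + 1) <;> simp [theta, h, h']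

theorem theta_not_eventuallyPeriodic : ¬ EventuallyPeriodic theta := by
  rintro ⟨p, hp, K, h⟩
  apply thueMorse_not_eventuallyPeriodic
  by_cases hconst : ∀ n, K ≤ n → theta (n + 1) = 2
  · exact ⟨1, one_pos, K, fun n hn => by rw [thueMorse_succ_eq_ite, if_pos (hconst n hn)]⟩
  push Not at hconst
  obtain ⟨n₀, hn₀K, hn₀⟩ := hconst
  -- Where `θ ≠ 2` the value of `t` is read off from `θ` alone; afterwards `θ` determines each step.
  have hθ : ∀ n, K ≤ n → theta (n + p + 1) = theta (n + 1) := fun n hn => by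
    rw [add_right_comm, h _ (by omega)]
  refine ⟨p, hp, n₀ + 1, fun n hn => ?_⟩
  induction n, hn using Nat.le_induction with
  | base =>
    rw [add_right_comm, thueMorse_succ_eq_ite, thueMorse_succ_eq_ite, hθ n₀ hn₀K, if_neg hn₀,
      if_neg hn₀]
  | succ n hn ih =>
    rw [add_right_comm, thueMorse_succ_eq_ite, thueMorse_succ_eq_ite, hθ n (by omega), ih]

theorem exists_thueMorse_descent (n : ℕ) :
    ∃ m, n ≤ m ∧ m ≤ n + 6 ∧ thueMorse m = true ∧ thueMorse (m + 1) = false := by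
  obtain ⟨j, hj, hj'⟩ : ∃ j, n < 4 * j ∧ 4 * j ≤ n + 4 := ⟨n / 4 + 1, by omega, by omega⟩
  have h4 : ∀ i < 4, thueMorse (4 * j + i) = xor (thueMorse j) (thueMorse i) :=
    fun i hi => thueMorse_two_pow_mul_add 2 j hi
  have ht : thueMorse 0 = false ∧ thueMorse 1 = true ∧ thueMorse 2 = true ∧
      thueMorse 3 = false := by
    norm_num [thueMorse]
  cases htj : thueMorse j
  · refine ⟨4 * j + 2, by omega, by omega, ?_, ?_⟩
    · simp [h4, htj, ht]
    · simp [add_assoc, h4, htj, ht]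
  · refine ⟨4 * j, by omega, by omega, ?_, ?_⟩
    · simpa [htj, ht] using h4 0 (by norm_num)
    · simp [h4, htj, ht]

/-- The block of `t` at `2 ^ k (m + 1)` copies `t 0 ⋯ t (2 ^ k - 1)`, and for `k` even it is entered
by the descent `t (2 ^ k (m + 1) - 1) = t m ⊕ t (2 ^ k - 1) = 1`, as `θ 0 = 0` presumes. -/
theorem theta_two_pow_mul_add {k m i : ℕ} (hk : Even k) (hm : thueMorse m = true)
    (hm' : thueMorse (m + 1) = false) (hi : i < 2 ^ k) :
    theta (2 ^ k * (m + 1) + i) = theta i := by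
  have hblock : ∀ i < 2 ^ k, thueMorse (2 ^ k * (m + 1) + i) = thueMorse i := fun i hi => by
    rw [thueMorse_two_pow_mul_add _ _ hi, hm', Bool.false_xor]
  cases i with
  | zero =>
    have hpos := Nat.one_le_two_pow (n := k)
    have hprev : 2 ^ k * (m + 1) = 2 ^ k * m + (2 ^ k - 1) + 1 := by rw [mul_add_one]; omega
    have hbefore : thueMorse (2 ^ k * m + (2 ^ k - 1)) = true := by
      rw [thueMorse_two_pow_mul_add _ _ (by omega), hm, thueMorse_two_pow_sub_one,
        Nat.even_iff.mp hk]
      rfl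
    have hstart := hblock 0 hi
    rw [add_zero] at hstart ⊢
    rw [hprev, theta.eq_2, hbefore, ← hprev, hstart]
    rfl
  | succ i =>
    rw [← add_assoc, theta, theta, hblock i (by omega), add_assoc, hblock (i + 1) hi]

theorem theta_uniformlyRecurrent : UniformlyRecurrent theta := by
  intro N
  have hN : N ≤ 2 ^ (2 * N) :=
    (Nat.lt_two_pow_self).le.trans (Nat.pow_le_pow_right two_pos (by omega))
  refine ⟨7 * 2 ^ (2 * N), fun p => ?_⟩
  obtain ⟨m, hm₁, hm₂, hm, hm'⟩ := exists_thueMorse_descent (p / 2 ^ (2 * N))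
  have hlo : p ≤ 2 ^ (2 * N) * (m + 1) :=
    (Nat.lt_mul_div_succ p (by positivity)).le.trans (Nat.mul_le_mul_left _ (by omega))
  have hhi : 2 ^ (2 * N) * (m + 1) ≤ p + 7 * 2 ^ (2 * N) :=
    calc 2 ^ (2 * N) * (m + 1) ≤ 2 ^ (2 * N) * (p / 2 ^ (2 * N) + 7) :=
          Nat.mul_le_mul_left _ (by omega)
      _ = 2 ^ (2 * N) * (p / 2 ^ (2 * N)) + 7 * 2 ^ (2 * N) := by ring
      _ ≤ p + 7 * 2 ^ (2 * N) := by gcongr; exact Nat.mul_div_le p _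
  refine ⟨2 ^ (2 * N) * (m + 1) - p, by omega, fun i hi => ?_⟩
  rw [Nat.add_sub_cancel' hlo]
  exact theta_two_pow_mul_add (even_two_mul N) hm hm' (by omega)

theorem runPos_strictMono : StrictMono runPos :=
  strictMono_nat_of_lt_succ fun n => by rw [runPos]; omega

theorem runPos_add_le (a d : ℕ) : runPos (a + d) ≤ runPos a + 4 * d := by
  induction d with
  | zero => simp
  | succ d ih =>
    rw [← add_assoc, runPos]
    have := theta_le_two (a + d)
    omega

theorem runPos_add_of_theta_eq {q N : ℕ} (hθ : ∀ i < N, theta (q + i) = theta i) :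
    ∀ i ≤ N, runPos (q + i) = runPos q + runPos i := by
  intro i hi
  induction i with
  | zero => rfl
  | succ i ih =>
    rw [← add_assoc, runPos, runPos, ih (by omega), hθ i (by omega)]
    omega

theorem alpha_eq_false_iff (m : ℕ) : alpha m = false ↔ m + 1 ∈ range runPos := by
  have : (∃ n, m + 1 = runPos (n + 1)) ↔ m + 1 ∈ range runPos := by
    constructor
    · rintro ⟨n, hn⟩
      exact ⟨n + 1, hn.symm⟩
    · rintro ⟨_ | n, hn⟩
      · simp [runPos] at hn
      · exact ⟨n, hn.symm⟩
  simp [alpha, this]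

theorem alpha_runPos_add {q N m : ℕ} (hθ : ∀ i < N, theta (q + i) = theta i)
    (hm : m < runPos N) : alpha (runPos q + m) = alpha m := by
  have := runPos_strictMono.add_mem_range_iff (runPos_add_of_theta_eq hθ) (m := m + 1) hm
  rw [← add_assoc, ← alpha_eq_false_iff, ← alpha_eq_false_iff] at this
  rwa [Bool.eq_iff_iff, ← not_iff_not, Bool.not_eq_true, Bool.not_eq_true]

theorem alpha_uniformlyRecurrent : UniformlyRecurrent alpha := by
  intro N
  obtain ⟨G, hG⟩ := theta_uniformlyRecurrent N
  refine ⟨4 * G + 4, fun p => ?_⟩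
  obtain ⟨n, hn, hn'⟩ := runPos_strictMono.exists_le_lt_succ (Nat.zero_le p)
  obtain ⟨j, hj, hθ⟩ := hG (n + 1)
  have hq : runPos (n + 1 + j) ≤ p + (4 * G + 4) := by
    have := runPos_add_le n (1 + j)
    rw [← add_assoc] at this
    omega
  have hpq : p ≤ runPos (n + 1 + j) := hn'.le.trans (runPos_strictMono.monotone (by omega))
  refine ⟨runPos (n + 1 + j) - p, by omega, fun i hi => ?_⟩
  rw [Nat.add_sub_cancel' hpq]
  exact alpha_runPos_add hθ (hi.trans_le runPos_strictMono.le_apply)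

theorem alpha_not_eventuallyPeriodic : ¬ EventuallyPeriodic alpha := by
  rintro ⟨p, hp, K, h⟩
  obtain ⟨d, hd⟩ := runPos_strictMono.exists_add_eq_add (K := K + 1) (p := p) fun m hm => by
    obtain ⟨m, rfl⟩ : ∃ m', m = m' + 1 := ⟨m - 1, by omega⟩
    rw [add_right_comm, ← alpha_eq_false_iff, ← alpha_eq_false_iff, h m (by omega)]
  refine theta_not_eventuallyPeriodic ⟨d, Nat.pos_of_ne_zero fun hd0 => ?_, K + 1, fun n hn => ?_⟩
  · have := hd (K + 1) le_rfl
    rw [hd0, add_zero] at this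
    omega
  · have h₁ := hd n hn
    have h₂ := hd (n + 1) (by omega)
    rw [add_right_comm, runPos, runPos] at h₂
    omega

/-- `α` is a Morse-type minimal point: its orbit closure under the shift map
is minimal and uncountable. -/
theorem alpha_morseTypeMinimal :
    (∀ K : Set (ℕ → Bool),
        K ⊆ closure {y : ℕ → Bool | ∃ k : ℕ, shift^[k] alpha = y} →
        K.Nonempty → IsClosed K → shift '' K ⊆ K →
        K = closure {y : ℕ → Bool | ∃ k : ℕ, shift^[k] alpha = y}) ∧
    ¬ (closure {y : ℕ → Bool | ∃ k : ℕ, shift^[k] alpha = y}).Countable := by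
  have hmin := isMinimalSet_of_uniformlyRecurrent alpha_uniformlyRecurrent
  have hperfect : Perfect (closure (range fun k => shift^[k] alpha)) :=
    ⟨isClosed_closure, preperfect_closure_range_iterate continuous_shift hmin fun _ _ hp hper =>
      alpha_not_eventuallyPeriodic (eventuallyPeriodic_of_isPeriodicPt_shift hp hper)⟩
  exact ⟨hmin, hperfect.not_countable ⟨alpha, subset_closure ⟨0, rfl⟩⟩⟩
end
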